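/- Let (g, g₊, g₋) be a finite-dimensional Manin triple over a field k of characteristic 0. Then the Lie bracket of g₊ together with the cobracket δ: g₊ → g₊ ∧ g₊ obtained by dualizing the Lie bracket of g₋ under the pairing induced by the invariant form makes g₊ a Lie bialgebra. -/

import Mathlib

/- STATEMENT 6: Let (g, g₊, g₋) be a finite-dimensional Manin triple over a
field k of characteristic 0.  Then the Lie bracket of g₊, together with the
cobracket δ : g₊ → g₊ ∧ g₊ obtained by dualizing the Lie bracket of g₋ under
the pairing induced by the invariant form, makes g₊ a Lie bialgebra. -/

open TensorProduct

variable (k : Type*) [Field k] [CharZero k]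
variable (L : Type*) [LieRing L] [LieAlgebra k L]

attribute [local instance 100] LieRing.ofAssociativeRing

/-- The Lie bracket of `L` as a linear map `L →ₗ End L`. -/
noncomputable def lieBr : L →ₗ[k] Module.End k L := (LieAlgebra.ad k L).toLinearMap

/-- The Lie bracket as a linear map on the tensor square. -/
noncomputable def liftBr : L ⊗[k] L →ₗ[k] L := TensorProduct.lift (lieBr k L)

/-- `(a⊗b)⊗(c⊗d) ↦ ⁅a,c⁆⊗b⊗d`, i.e. `φ⊗ψ ↦ [φ₁₂, ψ₁₃]` for `φ,ψ ∈ g⊗g ⊆ U(g)⊗U(g)`. -/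
noncomputable def t1 : (L ⊗[k] L) ⊗[k] (L ⊗[k] L) →ₗ[k] L ⊗[k] (L ⊗[k] L) :=
  (TensorProduct.map (liftBr k L) LinearMap.id) ∘ₗ
    (TensorProduct.tensorTensorTensorComm k L L L L).toLinearMap

/-- `(a⊗b)⊗(c⊗d) ↦ a⊗⁅b,c⁆⊗d`, i.e. `φ⊗ψ ↦ [φ₁₂, ψ₂₃]`. -/
noncomputable def t2 : (L ⊗[k] L) ⊗[k] (L ⊗[k] L) →ₗ[k] L ⊗[k] (L ⊗[k] L) :=
  (LinearMap.lTensor L ((LinearMap.rTensor L (liftBr k L)) ∘ₗ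
      (TensorProduct.assoc k L L L).symm.toLinearMap)) ∘ₗ
    (TensorProduct.assoc k L L (L ⊗[k] L)).toLinearMap

/-- `(a⊗b)⊗(c⊗d) ↦ a⊗c⊗⁅b,d⁆`, i.e. `φ⊗ψ ↦ [φ₁₃, ψ₂₃]`. -/
noncomputable def t3 : (L ⊗[k] L) ⊗[k] (L ⊗[k] L) →ₗ[k] L ⊗[k] (L ⊗[k] L) :=
  (LinearMap.lTensor L (LinearMap.lTensor L (liftBr k L))) ∘ₗ
    (TensorProduct.assoc k L L (L ⊗[k] L)).toLinearMap ∘ₗ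
    (TensorProduct.tensorTensorTensorComm k L L L L).toLinearMap

/-- The classical Yang–Baxter equation `[r₁₂,r₁₃]+[r₁₂,r₂₃]+[r₁₃,r₂₃] = 0`
(all terms lie in `g⊗g⊗g ⊆ U(g)^{⊗3}`). -/
def IsCYBE (r : L ⊗[k] L) : Prop :=
  t1 k L (r ⊗ₜ r) + t2 k L (r ⊗ₜ r) + t3 k L (r ⊗ₜ r) = 0

/-- `x ↦ (ad x ⊗ 1 + 1 ⊗ ad x)`, the adjoint action on the tensor square;
`adT x t = [x⊗1 + 1⊗x, t]` in `U(g)⊗U(g)`. -/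
noncomputable def adT : L →ₗ[k] (L ⊗[k] L →ₗ[k] L ⊗[k] L) :=
  ((LinearMap.rTensorHom L).comp (lieBr k L)) + ((LinearMap.lTensorHom L).comp (lieBr k L))

/-- `t ∈ g⊗g` is `g`-invariant: `[x⊗1 + 1⊗x, t] = 0` for all `x`. -/
def LieInvariantElem (t : L ⊗[k] L) : Prop := ∀ x : L, adT k L x t = 0

/-- The flip `r^op` of `r`. -/
noncomputable def rop (r : L ⊗[k] L) : L ⊗[k] L := (TensorProduct.comm k L L) r

/-- The coboundary cobracket `δ(x) = [r, x⊗1 + 1⊗x] = -(ad x ⊗ 1 + 1 ⊗ ad x)(r)`. -/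
noncomputable def cob (r : L ⊗[k] L) : L →ₗ[k] L ⊗[k] L :=
  -((LinearMap.applyₗ r) ∘ₗ (adT k L))

/-- The cyclic permutation `a⊗(b⊗c) ↦ b⊗(c⊗a)` on the triple tensor product. -/
noncomputable def cyc : L ⊗[k] (L ⊗[k] L) →ₗ[k] L ⊗[k] (L ⊗[k] L) :=
  (TensorProduct.assoc k L L L).toLinearMap ∘ₗ (TensorProduct.comm k L (L ⊗[k] L)).toLinearMap

/-- `δ` is co-skew-symmetric, i.e. takes values in `Λ²g ⊆ g⊗g`. -/
def IsCoSkew (D : L →ₗ[k] L ⊗[k] L) : Prop :=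
  ∀ x : L, (TensorProduct.comm k L L) (D x) = - D x

/-- The 1-cocycle condition
`δ([x,y]) = [δ(x), y⊗1+1⊗y] + [x⊗1+1⊗x, δ(y)]`. -/
def IsCocycle (D : L →ₗ[k] L ⊗[k] L) : Prop :=
  ∀ x y : L, D ⁅x, y⁆ = adT k L x (D y) - adT k L y (D x)

/-- The co-Jacobi identity: the cyclic sum of `(1⊗δ)∘δ` vanishes;
equivalently `δ*` is a Lie bracket on `g*`. -/
def IsCoJacobi (D : L →ₗ[k] L ⊗[k] L) : Prop :=
  ∀ x : L,
    (LinearMap.lTensor L D) (D x) + cyc k L ((LinearMap.lTensor L D) (D x)) +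
      cyc k L (cyc k L ((LinearMap.lTensor L D) (D x))) = 0

/-- `D` is a Lie bialgebra cobracket on `L`. -/
def IsLieCobracket (D : L →ₗ[k] L ⊗[k] L) : Prop :=
  IsCoSkew k L D ∧ IsCocycle k L D ∧ IsCoJacobi k L D

/-! The form identifies `g₋` with `g₊*` and hence `g₋ ⊗ g₋` with `(g₊ ⊗ g₊)*`, so `δ` is the
transpose of the bracket of `g₋`; co-skew-symmetry and co-Jacobi are the transposes of
antisymmetry and the Jacobi identity in `g₋`. Under the same identification `g₊` acts on `g₋` by
the coadjoint action `ξ ↦ π₋⁅x, ξ⁆`, where `π₋` projects onto `g₋` along `g₊`. Paired against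
`ξ ⊗ η`, the cocycle condition becomes an identity in `g`; it follows from invariance and the
Jacobi identity after splitting `⁅x, ξ⁆` along `g = g₊ ⊕ g₋`, since `g₊` and `g₋` are
isotropic. -/

namespace LinearMap

variable {K V₁ V₂ V₃ W₁ W₂ W₃ : Type*} [CommRing K] [AddCommGroup V₁] [Module K V₁]
  [AddCommGroup V₂] [Module K V₂] [AddCommGroup V₃] [Module K V₃]
  [AddCommGroup W₁] [Module K W₁] [AddCommGroup W₂] [Module K W₂] [AddCommGroup W₃] [Module K W₃]
  (P₁ : V₁ →ₗ[K] W₁ →ₗ[K] K) (P₂ : V₂ →ₗ[K] W₂ →ₗ[K] K)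

noncomputable def tensorPairing : V₁ ⊗[K] V₂ →ₗ[K] W₁ ⊗[K] W₂ →ₗ[K] K :=
  TensorProduct.dualDistrib K W₁ W₂ ∘ₗ TensorProduct.map P₁ P₂

@[simp]
lemma tensorPairing_tmul_tmul (a : V₁) (b : V₂) (ξ : W₁) (η : W₂) :
    tensorPairing P₁ P₂ (a ⊗ₜ b) (ξ ⊗ₜ η) = P₁ a ξ * P₂ b η :=
  rfl

lemma tensorPairing_apply_tmul (t : V₁ ⊗[K] V₂) (ξ : W₁) (η : W₂) :
    tensorPairing P₁ P₂ t (ξ ⊗ₜ η) =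
      (TensorProduct.lid K K ∘ₗ TensorProduct.map (P₁.flip ξ) (P₂.flip η)) t := by
  have : (tensorPairing P₁ P₂).flip (ξ ⊗ₜ η) =
      TensorProduct.lid K K ∘ₗ TensorProduct.map (P₁.flip ξ) (P₂.flip η) := by
    ext a b
    simp
  exact congr($this t)

lemma tensorPairing_comm (t : V₁ ⊗[K] V₂) (m : W₁ ⊗[K] W₂) :
    tensorPairing P₂ P₁ (TensorProduct.comm K V₁ V₂ t) (TensorProduct.comm K W₁ W₂ m) =
      tensorPairing P₁ P₂ t m := by
  have : (tensorPairing P₂ P₁).compl₁₂ (TensorProduct.comm K V₁ V₂).toLinearMap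
      (TensorProduct.comm K W₁ W₂).toLinearMap = tensorPairing P₁ P₂ := by
    ext a b ξ η
    simp [mul_comm]
  exact congr($this t m)

lemma tensorPairing_lTensor {Q : V₂ →ₗ[K] W₂ →ₗ[K] K} {Q' : V₃ →ₗ[K] W₃ →ₗ[K] K}
    {f : V₂ →ₗ[K] V₃} {g : W₃ →ₗ[K] W₂} (hfg : ∀ v w, Q' (f v) w = Q v (g w))
    (t : V₁ ⊗[K] V₂) (m : W₁ ⊗[K] W₃) :
    tensorPairing P₁ Q' (f.lTensor V₁ t) m = tensorPairing P₁ Q t (g.lTensor W₁ m) := by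
  have : (tensorPairing P₁ Q').compl₁₂ (f.lTensor V₁) LinearMap.id =
      (tensorPairing P₁ Q).compl₁₂ LinearMap.id (g.lTensor W₁) := by
    ext a b ξ w
    simp [hfg]
  exact congr($this t m)

instance [Module.Free K W₁] [Module.Finite K W₁] [Module.Free K W₂] [Module.Finite K W₂]
    [P₁.IsPerfPair] [P₂.IsPerfPair] : (tensorPairing P₁ P₂).IsPerfPair := by
  refine .of_bijective _ ?_
  have : tensorPairing P₁ P₂ = ((TensorProduct.congr P₁.toPerfPair P₂.toPerfPair).trans
      (TensorProduct.dualDistribEquiv K W₁ W₂) : V₁ ⊗[K] V₂ →ₗ[K] Module.Dual K (W₁ ⊗[K] W₂)) :=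
    rfl
  rw [this]
  exact LinearEquiv.bijective _

variable [Module.Free K W₁] [Module.Finite K W₁] [Module.Free K W₂] [Module.Finite K W₂]
  [P₁.IsPerfPair] [P₂.IsPerfPair]

lemma eq_of_tensorPairing_tmul_eq {t t' : V₁ ⊗[K] V₂}
    (h : ∀ ξ η, tensorPairing P₁ P₂ t (ξ ⊗ₜ η) = tensorPairing P₁ P₂ t' (ξ ⊗ₜ η)) : t = t' :=
  (tensorPairing P₁ P₂).toPerfPair.injective (TensorProduct.ext' h)

lemma eq_of_tensorPairing_tmul_tmul_eq [Module.Free K W₃] [Module.Finite K W₃]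
    (P₃ : V₃ →ₗ[K] W₃ →ₗ[K] K) [P₃.IsPerfPair] {t t' : V₁ ⊗[K] (V₂ ⊗[K] V₃)}
    (h : ∀ ξ η ζ, tensorPairing P₁ (tensorPairing P₂ P₃) t (ξ ⊗ₜ (η ⊗ₜ ζ)) =
      tensorPairing P₁ (tensorPairing P₂ P₃) t' (ξ ⊗ₜ (η ⊗ₜ ζ))) : t = t' :=
  (tensorPairing P₁ (tensorPairing P₂ P₃)).toPerfPair.injective (TensorProduct.ext_threefold' h)

end LinearMap

section LieTensorPairing

open LinearMap

variable {K V W : Type*} [Field K] [LieRing V] [LieAlgebra K V] [LieRing W] [LieAlgebra K W]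
  (P : V →ₗ[K] W →ₗ[K] K)

lemma tensorPairing_cyc (t : V ⊗[K] (V ⊗[K] V)) (ξ η ζ : W) :
    tensorPairing P (tensorPairing P P) (cyc K V t) (ξ ⊗ₜ (η ⊗ₜ ζ)) =
      tensorPairing P (tensorPairing P P) t (ζ ⊗ₜ (ξ ⊗ₜ η)) := by
  have : (tensorPairing P (tensorPairing P P)).flip (ξ ⊗ₜ (η ⊗ₜ ζ)) ∘ₗ cyc K V =
      (tensorPairing P (tensorPairing P P)).flip (ζ ⊗ₜ (ξ ⊗ₜ η)) := by
    ext a b c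
    simp [cyc, mul_comm, mul_left_comm]
  exact congr($this t)

lemma tensorPairing_adT (ρ : V → W → W) (hρ : ∀ x a ξ, P ⁅x, a⁆ ξ = -P a (ρ x ξ))
    (x : V) (t : V ⊗[K] V) (ξ η : W) :
    tensorPairing P P (adT K V x t) (ξ ⊗ₜ η) =
      -(tensorPairing P P t (ρ x ξ ⊗ₜ η) + tensorPairing P P t (ξ ⊗ₜ ρ x η)) := by
  induction t using TensorProduct.induction_on with
  | zero => simp
  | add t t' ht ht' => simp only [map_add, LinearMap.add_apply, ht, ht']; ring
  | tmul a b => simp [adT, lieBr, hρ, add_comm]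

end LieTensorPairing

section DualCobracket

open LinearMap

variable {K V W : Type*} [Field K] [LieRing V] [LieAlgebra K V] [LieRing W] [LieAlgebra K W]
  [FiniteDimensional K W] (P : V →ₗ[K] W →ₗ[K] K) [P.IsPerfPair]

noncomputable def dualCobracket : V →ₗ[K] V ⊗[K] V :=
  (tensorPairing P P).toPerfPair.symm.toLinearMap ∘ₗ
    (LieModule.toModuleHom K W W : W ⊗[K] W →ₗ[K] W).dualMap ∘ₗ P

lemma tensorPairing_dualCobracket (x : V) (m : W ⊗[K] W) :
    tensorPairing P P (dualCobracket P x) m = P x (LieModule.toModuleHom K W W m) := by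
  simp [dualCobracket]

@[simp]
lemma tensorPairing_dualCobracket_tmul (x : V) (ξ η : W) :
    tensorPairing P P (dualCobracket P x) (ξ ⊗ₜ η) = P x ⁅ξ, η⁆ := by
  simp [tensorPairing_dualCobracket]

lemma isCoSkew_dualCobracket : IsCoSkew K V (dualCobracket P) := by
  intro x
  refine eq_of_tensorPairing_tmul_eq P P fun ξ η => ?_
  have h := tensorPairing_comm P P (dualCobracket P x) (η ⊗ₜ ξ)
  rw [TensorProduct.comm_tmul] at h
  rw [h, map_neg, LinearMap.neg_apply, tensorPairing_dualCobracket_tmul,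
    tensorPairing_dualCobracket_tmul, ← lie_skew, map_neg]

lemma isCoJacobi_dualCobracket : IsCoJacobi K V (dualCobracket P) := by
  intro x
  refine eq_of_tensorPairing_tmul_tmul_eq P P P fun ξ η ζ => ?_
  simp only [map_add, LinearMap.add_apply, tensorPairing_cyc,
    tensorPairing_lTensor P (tensorPairing_dualCobracket P), LinearMap.lTensor_tmul,
    LieModuleHom.coe_toLinearMap, LieModule.toModuleHom_apply, tensorPairing_dualCobracket_tmul,
    map_zero, LinearMap.zero_apply]
  rw [← map_add, ← map_add, add_right_comm, lie_jacobi, map_zero]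

-- `hcompat` is the cocycle identity paired against `ξ ⊗ η`.
lemma isCocycle_dualCobracket (ρ : V → W → W) (hρ : ∀ x a ξ, P ⁅x, a⁆ ξ = -P a (ρ x ξ))
    (hcompat : ∀ x y ξ η, P ⁅x, y⁆ ⁅ξ, η⁆ =
      P x (⁅ρ y ξ, η⁆ + ⁅ξ, ρ y η⁆) - P y (⁅ρ x ξ, η⁆ + ⁅ξ, ρ x η⁆)) :
    IsCocycle K V (dualCobracket P) := by
  intro x y
  refine eq_of_tensorPairing_tmul_eq P P fun ξ η => ?_
  rw [map_sub, LinearMap.sub_apply, tensorPairing_adT P ρ hρ, tensorPairing_adT P ρ hρ]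
  simp only [tensorPairing_dualCobracket_tmul, hcompat, map_add]
  ring

end DualCobracket

section IsotropicComplement

variable {R E N : Type*} [CommRing R] [AddCommGroup E] [Module R E] [AddCommGroup N] [Module R N]
  (B : E →ₗ[R] E →ₗ[R] N) {p q : Submodule R E}

lemma apply_projection_of_isotropic (hpq : IsCompl p q) (hp : ∀ x ∈ p, ∀ y ∈ p, B x y = 0)
    {x : E} (hx : x ∈ p) (w : E) : B x (q.projection p hpq.symm w) = B x w := by
  conv_rhs => rw [← Submodule.projection_add_projection_eq_self hpq w]
  rw [map_add, hp x hx _ (Submodule.projection_apply_mem _ _), zero_add]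

lemma projection_apply_of_isotropic (hpq : IsCompl p q) (hq : ∀ x ∈ q, ∀ y ∈ q, B x y = 0)
    {y : E} (hy : y ∈ q) (w : E) : B (p.projection q hpq w) y = B w y :=
  apply_projection_of_isotropic B.flip hpq.symm (fun x hx y hy => hq y hy x hx) hy w

lemma eq_zero_of_isotropic_of_forall_apply_eq_zero (hnondeg : ∀ x, (∀ y, B x y = 0) → x = 0)
    (hpq : IsCompl p q) (hp : ∀ x ∈ p, ∀ y ∈ p, B x y = 0) {x : E} (hx : x ∈ p)
    (h : ∀ y ∈ q, B x y = 0) : x = 0 :=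
  hnondeg x fun w => by
    rw [← apply_projection_of_isotropic B hpq hp hx, h _ (Submodule.projection_apply_mem _ _)]

end IsotropicComplement

section ManinTriple

variable {R 𝔤 : Type*} [CommRing R] [LieRing 𝔤] [LieAlgebra R 𝔤] (B : 𝔤 →ₗ[R] 𝔤 →ₗ[R] R)

lemma apply_lie_apply_of_invariant (hinv : ∀ x y z : 𝔤, B ⁅x, y⁆ z + B y ⁅x, z⁆ = 0)
    (u v w : 𝔤) : B ⁅u, v⁆ w = B u ⁅v, w⁆ := by
  rw [← lie_skew, map_neg, LinearMap.neg_apply]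
  linear_combination -hinv v u w

def maninPairing (gp gm : LieSubalgebra R 𝔤) : gp →ₗ[R] gm →ₗ[R] R :=
  B.compl₁₂ gp.incl.toLinearMap gm.incl.toLinearMap

@[simp]
lemma maninPairing_apply {gp gm : LieSubalgebra R 𝔤} (x : gp) (ξ : gm) :
    maninPairing B gp gm x ξ = B x ξ :=
  rfl

variable {gp gm : LieSubalgebra R 𝔤}

noncomputable def coadjointAction (hcompl : IsCompl gp.toSubmodule gm.toSubmodule)
    (x : gp) (ξ : gm) : gm :=
  ⟨gm.toSubmodule.projection gp.toSubmodule hcompl.symm ⁅(x : 𝔤), (ξ : 𝔤)⁆,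
    Submodule.projection_apply_mem _ _⟩

lemma maninPairing_lie_left (hinv : ∀ x y z : 𝔤, B ⁅x, y⁆ z + B y ⁅x, z⁆ = 0)
    (hcompl : IsCompl gp.toSubmodule gm.toSubmodule) (hisop : ∀ x ∈ gp, ∀ y ∈ gp, B x y = 0)
    (x a : gp) (ξ : gm) :
    maninPairing B gp gm ⁅x, a⁆ ξ = -maninPairing B gp gm a (coadjointAction hcompl x ξ) := by
  simp only [maninPairing_apply, coadjointAction, LieSubalgebra.coe_bracket,
    apply_projection_of_isotropic B hcompl hisop a.2]
  linear_combination hinv x a ξ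

lemma apply_lie_projection_lie (hinv : ∀ x y z : 𝔤, B ⁅x, y⁆ z + B y ⁅x, z⁆ = 0)
    (hcompl : IsCompl gp.toSubmodule gm.toSubmodule) (hisop : ∀ x ∈ gp, ∀ y ∈ gp, B x y = 0)
    (hisom : ∀ x ∈ gm, ∀ y ∈ gm, B x y = 0) (x y ξ η : 𝔤) :
    B x ⁅gp.toSubmodule.projection gm.toSubmodule hcompl ⁅y, ξ⁆, η⁆ =
      -B y ⁅ξ, gm.toSubmodule.projection gp.toSubmodule hcompl.symm ⁅x, η⁆⁆ := by
  have hassoc := apply_lie_apply_of_invariant B hinv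
  set u := gp.toSubmodule.projection gm.toSubmodule hcompl ⁅y, ξ⁆
  set ζ := gm.toSubmodule.projection gp.toSubmodule hcompl.symm ⁅x, η⁆
  calc B x ⁅u, η⁆ = -B u ⁅x, η⁆ := by
        rw [← hassoc, ← lie_skew, map_neg, LinearMap.neg_apply, hassoc]
    _ = -B u ζ := by rw [apply_projection_of_isotropic B hcompl hisop
          (Submodule.projection_apply_mem _ _)]
    _ = -B ⁅y, ξ⁆ ζ := by rw [projection_apply_of_isotropic B hcompl hisom
          (Submodule.projection_apply_mem _ _)]
    _ = -B y ⁅ξ, ζ⁆ := by rw [hassoc]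

lemma maninPairing_lie_lie (hinv : ∀ x y z : 𝔤, B ⁅x, y⁆ z + B y ⁅x, z⁆ = 0)
    (hcompl : IsCompl gp.toSubmodule gm.toSubmodule) (hisop : ∀ x ∈ gp, ∀ y ∈ gp, B x y = 0)
    (hisom : ∀ x ∈ gm, ∀ y ∈ gm, B x y = 0) (x y : gp) (ξ η : gm) :
    maninPairing B gp gm ⁅x, y⁆ ⁅ξ, η⁆ =
      maninPairing B gp gm x
          (⁅coadjointAction hcompl y ξ, η⁆ + ⁅ξ, coadjointAction hcompl y η⁆) -
        maninPairing B gp gm y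
          (⁅coadjointAction hcompl x ξ, η⁆ + ⁅ξ, coadjointAction hcompl x η⁆) := by
  have hcross := apply_lie_projection_lie B hinv hcompl hisop hisom
  simp only [maninPairing_apply, coadjointAction, LieSubalgebra.coe_bracket, map_add]
  set πp := gp.toSubmodule.projection gm.toSubmodule hcompl
  set πm := gm.toSubmodule.projection gp.toSubmodule hcompl.symm
  have hsplit (w : 𝔤) : πp w + πm w = w := Submodule.projection_add_projection_eq_self hcompl w
  have hsym : B x ⁅(ξ : 𝔤), πp ⁅(y : 𝔤), (η : 𝔤)⁆⁆ = -B y ⁅πm ⁅(x : 𝔤), (ξ : 𝔤)⁆, (η : 𝔤)⁆ := by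
    rw [← lie_skew, map_neg, hcross, ← lie_skew, map_neg, neg_neg]
  calc B ⁅(x : 𝔤), (y : 𝔤)⁆ ⁅(ξ : 𝔤), (η : 𝔤)⁆ = B x ⁅(y : 𝔤), ⁅(ξ : 𝔤), (η : 𝔤)⁆⁆ :=
        apply_lie_apply_of_invariant B hinv _ _ _
    _ = B x ⁅πp ⁅(y : 𝔤), (ξ : 𝔤)⁆ + πm ⁅(y : 𝔤), (ξ : 𝔤)⁆, η⁆ +
          B x ⁅(ξ : 𝔤), πp ⁅(y : 𝔤), (η : 𝔤)⁆ + πm ⁅(y : 𝔤), (η : 𝔤)⁆⁆ := by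
        rw [hsplit, hsplit, leibniz_lie, map_add]
    _ = _ := by
        rw [add_lie, lie_add, map_add, map_add, hcross, hsym]
        ring

end ManinTriple

lemma isPerfPair_maninPairing {K 𝔤 : Type*} [Field K] [LieRing 𝔤] [LieAlgebra K 𝔤]
    [FiniteDimensional K 𝔤] (B : 𝔤 →ₗ[K] 𝔤 →ₗ[K] K) {gp gm : LieSubalgebra K 𝔤}
    (hsymm : ∀ x y, B x y = B y x) (hnondeg : ∀ x, (∀ y, B x y = 0) → x = 0)
    (hcompl : IsCompl gp.toSubmodule gm.toSubmodule) (hisop : ∀ x ∈ gp, ∀ y ∈ gp, B x y = 0)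
    (hisom : ∀ x ∈ gm, ∀ y ∈ gm, B x y = 0) : (maninPairing B gp gm).IsPerfPair := by
  refine .of_injective (injective_iff_map_eq_zero _ |>.mpr fun x hx => ?_)
    (injective_iff_map_eq_zero _ |>.mpr fun ξ hξ => ?_)
  · refine Subtype.ext (eq_zero_of_isotropic_of_forall_apply_eq_zero B hnondeg hcompl hisop x.2
      fun ξ hξ => ?_)
    exact congr($hx ⟨ξ, hξ⟩)
  · refine Subtype.ext (eq_zero_of_isotropic_of_forall_apply_eq_zero B hnondeg hcompl.symm hisom
      ξ.2 fun x hx => ?_)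
    rw [hsymm]
    exact congr($hξ ⟨x, hx⟩)

theorem stmt6 [FiniteDimensional k L]
    (gp gm : LieSubalgebra k L)
    (B : L →ₗ[k] L →ₗ[k] k)
    (hsymm : ∀ x y : L, B x y = B y x)
    (hnondeg : ∀ x : L, (∀ y : L, B x y = 0) → x = 0)
    (hinv : ∀ x y z : L, B ⁅x, y⁆ z + B y ⁅x, z⁆ = 0)
    (hcompl : IsCompl gp.toSubmodule gm.toSubmodule)
    (hisop : ∀ x ∈ gp, ∀ y ∈ gp, B x y = 0)
    (hisom : ∀ x ∈ gm, ∀ y ∈ gm, B x y = 0) :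
    ∃ δ : ↥gp →ₗ[k] ↥gp ⊗[k] ↥gp,
      -- δ is dual to the bracket of g₋ under the pairing induced by B :
      (∀ (x : ↥gp) (ξ η : ↥gm),
        ((TensorProduct.lid k k).toLinearMap ∘ₗ
          (TensorProduct.map ((B.flip (ξ : L)) ∘ₗ gp.incl.toLinearMap)
            ((B.flip (η : L)) ∘ₗ gp.incl.toLinearMap))) (δ x) =
          B (x : L) ((⁅ξ, η⁆ : ↥gm) : L)) ∧
      -- and (g₊, [·,·], δ) is a Lie bialgebra :
      IsLieCobracket k (↥gp) δ := by
  have := isPerfPair_maninPairing B hsymm hnondeg hcompl hisop hisom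
  refine ⟨dualCobracket (maninPairing B gp gm), fun x ξ η => ?_,
    isCoSkew_dualCobracket _,
    isCocycle_dualCobracket _ (coadjointAction hcompl) (maninPairing_lie_left B hinv hcompl hisop)
      (maninPairing_lie_lie B hinv hcompl hisop hisom),
    isCoJacobi_dualCobracket _⟩
  have h := tensorPairing_dualCobracket_tmul (maninPairing B gp gm) x ξ η
  rw [LinearMap.tensorPairing_apply_tmul] at h
  exact h
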